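/- arXiv:1608.07944 — 6 statements merged into one kernel-verified Lean document; each statement's English description precedes it below -/
import Mathlib

section
/- The derivative m′ of m(x) = (tanh(x)/x)^{1/2} on (0,∞) satisfies |m′(x)|² ≲ x^{-3} for x sufficiently large; in particular m′ is square-integrable on (1,∞). -/
/-!
Write `m = √g` with `g x = tanh x / x`, so that `m'² = g'² / (4 g)`. Since `x ≤ sinh x` for
`x ≥ 0`, the two terms of `x² g'(x) = x / cosh² x - tanh x` both lie in `[0, tanh x]`, hence
`|g'(x)| ≤ tanh x / x²` and `m'(x)² ≤ tanh x / (4 x³) ≤ x⁻³ / 4` for every `x > 0`.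
-/

open Real MeasureTheory Set

namespace Real

theorem hasDerivAt_tanh (x : ℝ) : HasDerivAt tanh (1 / cosh x ^ 2) x := by
  have h := (hasDerivAt_sinh x).div (hasDerivAt_cosh x) (cosh_pos x).ne'
  rw [show sinh / cosh = tanh from funext fun y => (tanh_eq_sinh_div_cosh y).symm] at h
  exact h.congr_deriv (by rw [← sq, ← sq, cosh_sq_sub_sinh_sq])

theorem tanh_pos {x : ℝ} (hx : 0 < x) : 0 < tanh x := by
  rw [tanh_eq_sinh_div_cosh]
  exact div_pos (sinh_pos_iff.2 hx) (cosh_pos x)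

theorem abs_div_cosh_sq_sub_tanh_le_tanh {x : ℝ} (hx : 0 ≤ x) :
    |x / cosh x ^ 2 - tanh x| ≤ tanh x := by
  have hcosh := cosh_pos x
  have hdiv_nonneg : 0 ≤ x / cosh x ^ 2 := by positivity
  have hdiv_le : x / cosh x ^ 2 ≤ tanh x := by
    calc x / cosh x ^ 2 ≤ x / cosh x :=
          div_le_div_of_nonneg_left hx hcosh (by nlinarith [one_le_cosh x])
      _ ≤ sinh x / cosh x := by gcongr; exact self_le_sinh_iff.2 hx
      _ = tanh x := (tanh_eq_sinh_div_cosh x).symm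
  rw [abs_le]
  constructor <;> linarith

end Real

theorem sq_deriv_sqrt {f : ℝ → ℝ} {f' x : ℝ} (hf : HasDerivAt f f' x) (hx : 0 < f x) :
    deriv (fun y => √(f y)) x ^ 2 = f' ^ 2 / (4 * f x) := by
  rw [(hf.sqrt hx.ne').deriv, div_pow, mul_pow, sq_sqrt hx.le]
  norm_num

theorem sq_deriv_sqrt_tanh_div_self_le {x : ℝ} (hx : 0 < x) :
    deriv (fun y => √(tanh y / y)) x ^ 2 ≤ 4⁻¹ * x ^ (-(3 : ℝ)) := by
  have htanh := tanh_pos hx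
  have hderiv : HasDerivAt (fun y => tanh y / y) ((x / cosh x ^ 2 - tanh x) / x ^ 2) x := by
    exact ((hasDerivAt_tanh x).div (hasDerivAt_id' x) hx.ne').congr_deriv (by ring)
  have hnum_sq : (x / cosh x ^ 2 - tanh x) ^ 2 ≤ tanh x ^ 2 :=
    sq_le_sq.2 ((abs_div_cosh_sq_sub_tanh_le_tanh hx.le).trans (le_abs_self _))
  rw [sq_deriv_sqrt hderiv (div_pos htanh hx), rpow_neg hx.le, rpow_ofNat]
  calc ((x / cosh x ^ 2 - tanh x) / x ^ 2) ^ 2 / (4 * (tanh x / x))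
      ≤ (tanh x / x ^ 2) ^ 2 / (4 * (tanh x / x)) := by
        rw [div_pow, div_pow]; gcongr
    _ = tanh x * (4⁻¹ * (x ^ 3)⁻¹) := by field_simp
    _ ≤ 4⁻¹ * (x ^ 3)⁻¹ := mul_le_of_le_one_left (by positivity) (tanh_lt_one x).le

/-- |m′(x)|² ≲ x^{-3} for large x, and m′ is square integrable on (1,∞). -/
theorem m_deriv_decay :
    (∃ M C : ℝ, 0 < M ∧ 0 < C ∧
      ∀ x : ℝ, M < x →
        (deriv (fun y : ℝ => Real.sqrt (Real.tanh y / y)) x) ^ 2 ≤ C * x ^ (-(3 : ℝ))) ∧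
    MeasureTheory.IntegrableOn
      (fun x : ℝ => (deriv (fun y : ℝ => Real.sqrt (Real.tanh y / y)) x) ^ 2)
      (Set.Ioi 1) := by
  have hbound : ∀ x : ℝ, 1 < x →
      deriv (fun y => √(tanh y / y)) x ^ 2 ≤ 4⁻¹ * x ^ (-(3 : ℝ)) :=
    fun x hx => sq_deriv_sqrt_tanh_div_self_le (one_pos.trans hx)
  refine ⟨⟨1, 4⁻¹, one_pos, by norm_num, hbound⟩, ?_⟩
  have hmajorant : IntegrableOn (fun x : ℝ => 4⁻¹ * x ^ (-(3 : ℝ))) (Ioi 1) :=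
    (integrableOn_Ioi_rpow_of_lt (by norm_num) one_pos).const_mul _
  refine hmajorant.mono' ((measurable_deriv _).pow_const 2).aestronglyMeasurable ?_
  filter_upwards [ae_restrict_mem measurableSet_Ioi] with x hx
  rw [norm_of_nonneg (sq_nonneg _)]
  exact hbound x hx
end

section
/- For δ ∈ (0, π/2), the function z ↦ tanh(z)/z (with value 1 at z = 0) is holomorphic on the strip {z ∈ ℂ : |Im z| ≤ δ} and satisfies |tanh(z)/z| ≤ tan(δ)/δ there, with the maximum of |tanh(z)/z| over the strip attained at z = iδ. -/
/-!
Write `z = x + iy`. Since `‖sinh z‖² = sinh² x cos² y + cosh² x sin² y` and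
`‖cosh z‖² ≥ cosh² x cos² y`, the bound `‖tanh z‖ ≤ (tan δ / δ) ‖z‖` on the strip follows from
`|sinh x| ≤ |x| cosh x` (mean value theorem, `cosh` increasing in `|x|`),
`tan |y| ≤ (tan δ / δ) |y|` (convexity of `tan` on `[0, π/2)`) and `1 ≤ tan δ / δ`.
The function `tanh z / z` extended by `1` is the difference quotient `dslope tanh 0`, which is
holomorphic wherever `tanh` is, i.e. where `cosh ≠ 0`. Equality holds at `iδ` because
`tanh (iδ) = i tan δ`.
-/

open Real Complex

namespace Real

theorem abs_sinh_le_abs_mul_cosh (x : ℝ) : |sinh x| ≤ |x| * cosh x := by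
  rw [abs_sinh, ← cosh_abs]
  rcases (abs_nonneg x).eq_or_lt with hx | hx
  · simp [← hx]
  obtain ⟨c, hc, hslope⟩ := exists_deriv_eq_slope sinh hx continuous_sinh.continuousOn
    differentiable_sinh.differentiableOn
  rw [deriv_sinh, sinh_zero, sub_zero, sub_zero, eq_div_iff hx.ne'] at hslope
  rw [← hslope, mul_comm]
  gcongr
  rw [cosh_le_cosh, abs_of_pos hc.1]
  exact hc.2.le.trans (le_abs_self _)

theorem convexOn_tan : ConvexOn ℝ (Set.Ico 0 (π / 2)) tan := by
  have hcos : ∀ x ∈ Set.Ico 0 (π / 2), 0 < cos x := fun x hx =>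
    cos_pos_of_mem_Ioo ⟨by linarith [hx.1, pi_pos], hx.2⟩
  refine MonotoneOn.convexOn_of_deriv (convex_Ico _ _)
    (continuousOn_tan.mono fun x hx => (hcos x hx).ne')
    (fun x hx =>
      (differentiableAt_tan.2 (hcos x (interior_subset hx)).ne').differentiableWithinAt) ?_
  rw [interior_Ico]
  intro x hx y hy hxy
  simp only [deriv_tan]
  have hcos_le := cos_le_cos_of_nonneg_of_le_pi hx.1.le (by linarith [hy.2, pi_pos]) hxy
  have hy0 := hcos y (Set.Ioo_subset_Ico_self hy)
  gcongr

theorem tan_le_tan_div_mul {x y : ℝ} (hy : 0 ≤ y) (hyx : y ≤ x) (hx : x < π / 2) :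
    tan y ≤ tan x / x * y := by
  rcases hy.eq_or_lt with rfl | hy
  · simp
  have h := convexOn_tan.secant_mono ⟨le_rfl, by positivity⟩ ⟨hy.le, hyx.trans_lt hx⟩
    ⟨hy.trans_le hyx |>.le, hx⟩ hy.ne' (hy.trans_le hyx).ne' hyx
  simp only [tan_zero, sub_zero] at h
  rwa [div_le_iff₀ hy] at h

end Real

namespace Complex

theorem sq_norm_sinh (z : ℂ) : ‖sinh z‖ ^ 2 =
    (Real.sinh z.re * Real.cos z.im) ^ 2 + (Real.cosh z.re * Real.sin z.im) ^ 2 := by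
  have : sinh z = ↑(Real.sinh z.re * Real.cos z.im) + ↑(Real.cosh z.re * Real.sin z.im) * I := by
    conv_lhs => rw [← re_add_im z]
    rw [sinh_add, cosh_mul_I, sinh_mul_I]
    push_cast
    ring
  rw [Complex.sq_norm, this, normSq_add_mul_I]

theorem sq_norm_cosh (z : ℂ) : ‖cosh z‖ ^ 2 =
    (Real.cosh z.re * Real.cos z.im) ^ 2 + (Real.sinh z.re * Real.sin z.im) ^ 2 := by
  have : cosh z = ↑(Real.cosh z.re * Real.cos z.im) + ↑(Real.sinh z.re * Real.sin z.im) * I := by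
    conv_lhs => rw [← re_add_im z]
    rw [cosh_add, cosh_mul_I, sinh_mul_I]
    push_cast
    ring
  rw [Complex.sq_norm, this, normSq_add_mul_I]

theorem cosh_ne_zero_of_abs_im_lt {z : ℂ} (hz : |z.im| < π / 2) : cosh z ≠ 0 := by
  have h := sq_norm_cosh z
  have hpos : 0 < Real.cosh z.re * Real.cos z.im :=
    mul_pos (Real.cosh_pos _) (Real.cos_pos_of_mem_Ioo (abs_lt.1 hz))
  intro h0
  rw [h0, norm_zero] at h
  nlinarith [sq_nonneg (Real.sinh z.re * Real.sin z.im)]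

theorem hasDerivAt_tanh {z : ℂ} (hz : cosh z ≠ 0) : HasDerivAt tanh (1 / cosh z ^ 2) z := by
  have h := (hasDerivAt_sinh z).div (hasDerivAt_cosh z) hz
  rw [← sq, ← sq, cosh_sq_sub_sinh_sq] at h
  exact h.congr_of_eventuallyEq (.of_forall fun w => tanh_eq_sinh_div_cosh w)

theorem differentiableOn_tanh : DifferentiableOn ℂ tanh {z : ℂ | |z.im| < π / 2} :=
  fun _ hz =>
    (hasDerivAt_tanh (cosh_ne_zero_of_abs_im_lt hz)).differentiableAt.differentiableWithinAt

theorem dslope_tanh_zero (z : ℂ) : dslope tanh 0 z = if z = 0 then 1 else tanh z / z := by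
  split_ifs with hz
  · simpa [hz] using (hasDerivAt_tanh (z := 0) (by simp)).deriv
  · rw [dslope_of_ne _ hz, slope_def_field, tanh_zero, sub_zero, sub_zero]

theorem differentiableOn_dslope_tanh_zero :
    DifferentiableOn ℂ (dslope tanh 0) {z : ℂ | |z.im| < π / 2} := by
  have hopen : IsOpen {z : ℂ | |z.im| < π / 2} :=
    isOpen_lt (continuous_abs.comp continuous_im) continuous_const
  exact (differentiableOn_dslope (hopen.mem_nhds (by simp [pi_pos]))).2 differentiableOn_tanh

theorem norm_tanh_le_of_abs_im_le {δ : ℝ} (hδ0 : 0 < δ) (hδ : δ < π / 2) {z : ℂ}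
    (hz : |z.im| ≤ δ) : ‖tanh z‖ ≤ Real.tan δ / δ * ‖z‖ := by
  set T := Real.tan δ / δ
  set x := z.re
  set y := z.im
  have hT : 1 ≤ T := (one_le_div hδ0).2 (Real.lt_tan hδ0 hδ).le
  have hcos : 0 < Real.cos y := Real.cos_pos_of_mem_Ioo (abs_lt.1 (hz.trans_lt hδ))
  have hsinh : Real.sinh x ^ 2 ≤ x ^ 2 * Real.cosh x ^ 2 := by
    rw [← sq_abs, ← sq_abs x, ← mul_pow]
    exact pow_le_pow_left₀ (abs_nonneg _) (Real.abs_sinh_le_abs_mul_cosh x) 2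
  have hsin : Real.sin y ^ 2 ≤ T ^ 2 * y ^ 2 * Real.cos y ^ 2 := by
    have h := Real.tan_le_tan_div_mul (abs_nonneg y) hz hδ
    rw [Real.tan_eq_sin_div_cos, Real.cos_abs, div_le_iff₀ hcos] at h
    have hsin0 : 0 ≤ Real.sin |y| :=
      Real.sin_nonneg_of_nonneg_of_le_pi (abs_nonneg y) (by linarith [hz, pi_pos])
    have h2 := pow_le_pow_left₀ hsin0 h 2
    rwa [Real.sin_sq, Real.cos_abs, ← Real.sin_sq, mul_pow, mul_pow, sq_abs] at h2
  have hsq : ‖sinh z‖ ^ 2 ≤ (T * ‖z‖ * ‖cosh z‖) ^ 2 := by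
    have hcc := sq_norm_cosh z
    calc ‖sinh z‖ ^ 2
        = Real.cosh x ^ 2 * Real.sin y ^ 2 + Real.sinh x ^ 2 * Real.cos y ^ 2 := by
          rw [sq_norm_sinh]; ring
      _ ≤ Real.cosh x ^ 2 * (T ^ 2 * y ^ 2 * Real.cos y ^ 2)
          + T ^ 2 * (x ^ 2 * Real.cosh x ^ 2) * Real.cos y ^ 2 := by
          gcongr
          nlinarith [one_le_pow₀ (n := 2) hT, sq_nonneg x, sq_nonneg (Real.cosh x)]
      _ = T ^ 2 * (x ^ 2 + y ^ 2) * (Real.cosh x * Real.cos y) ^ 2 := by ring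
      _ ≤ T ^ 2 * (x ^ 2 + y ^ 2) * ‖cosh z‖ ^ 2 := by
          refine mul_le_mul_of_nonneg_left ?_ (by positivity)
          rw [hcc]
          exact le_add_of_nonneg_right (sq_nonneg _)
      _ = (T * ‖z‖ * ‖cosh z‖) ^ 2 := by
          rw [mul_pow, mul_pow, Complex.sq_norm z, normSq_apply]; ring
  have hcosh : 0 < ‖cosh z‖ := norm_pos_iff.2 (cosh_ne_zero_of_abs_im_lt (hz.trans_lt hδ))
  rw [tanh_eq_sinh_div_cosh, norm_div, div_le_iff₀ hcosh]
  exact (pow_le_pow_iff_left₀ (norm_nonneg _) (by positivity) two_ne_zero).1 hsq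

end Complex

/-- The function tanh(z)/z (with value 1 at 0) is holomorphic on the strip |Im z| ≤ δ,
bounded there by tan δ / δ, with maximum modulus attained at z = iδ. -/
theorem tanh_div_self_strip (δ : ℝ) (hδ : δ ∈ Set.Ioo 0 (Real.pi / 2))
    (f : ℂ → ℂ) (hf : ∀ z : ℂ, f z = if z = 0 then 1 else Complex.tanh z / z) :
    DifferentiableOn ℂ f {z : ℂ | |z.im| ≤ δ} ∧
    (∀ z : ℂ, |z.im| ≤ δ → ‖f z‖ ≤ Real.tan δ / δ) ∧
    IsMaxOn (fun z : ℂ => ‖f z‖) {z : ℂ | |z.im| ≤ δ} ((δ : ℂ) * Complex.I) := by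
  obtain ⟨hδ0, hδ⟩ := hδ
  have hδ_lt_tan : δ < Real.tan δ := Real.lt_tan hδ0 hδ
  have hbound (z : ℂ) (hz : |z.im| ≤ δ) : ‖f z‖ ≤ Real.tan δ / δ := by
    rw [hf z]
    split_ifs with hz0
    · rw [norm_one, one_le_div hδ0]
      exact hδ_lt_tan.le
    · rw [norm_div, div_le_iff₀ (norm_pos_iff.2 hz0)]
      exact Complex.norm_tanh_le_of_abs_im_le hδ0 hδ hz
  have hf_mul_I : ‖f (δ * I)‖ = Real.tan δ / δ := by
    rw [hf, if_neg (by simp [hδ0.ne']), tanh_mul_I, mul_div_mul_right _ _ I_ne_zero,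
      ← ofReal_tan, ← ofReal_div, norm_real, Real.norm_of_nonneg]
    exact (div_pos (hδ0.trans hδ_lt_tan) hδ0).le
  refine ⟨?_, hbound, fun z hz => ?_⟩
  · have hf_eq : f = dslope Complex.tanh 0 :=
      funext fun z => (hf z).trans (Complex.dslope_tanh_zero z).symm
    rw [hf_eq]
    exact Complex.differentiableOn_dslope_tanh_zero.mono fun z hz => hz.out.trans_lt hδ
  · show ‖f z‖ ≤ ‖f (δ * I)‖
    exact hf_mul_I ▸ hbound z hz
end

section
/- If g is completely monotone on (0,∞) and c > g(x) for all x > 0 with c > lim_{x→0} g(x), then x ↦ g(x)/(c − g(x)) is completely monotone on (0,∞). -/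
open Real Set

/-- A smooth function on (0,∞) is completely monotone if (−1)ⁿ f⁽ⁿ⁾ ≥ 0 for all n. -/
def CompletelyMonotone (f : ℝ → ℝ) : Prop :=
  ContDiffOn ℝ (⊤ : ℕ∞) f (Set.Ioi 0) ∧
  ∀ n : ℕ, ∀ x : ℝ, 0 < x →
    0 ≤ (-1 : ℝ) ^ n * iteratedDerivWithin n f (Set.Ioi 0) x

/-- Completely monotone up to order `n`. -/
def CMle (n : ℕ) (f : ℝ → ℝ) : Prop :=
  ContDiffOn ℝ (⊤ : ℕ∞) f (Set.Ioi 0) ∧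
  ∀ k : ℕ, k ≤ n → ∀ x : ℝ, 0 < x →
    0 ≤ (-1 : ℝ) ^ k * iteratedDerivWithin k f (Set.Ioi 0) x

lemma CMle.mono {m n : ℕ} {f : ℝ → ℝ} (h : CMle n f) (hmn : m ≤ n) : CMle m f :=
  ⟨h.1, fun k hk => h.2 k (hk.trans hmn)⟩

lemma CMle_negDeriv {n : ℕ} {f : ℝ → ℝ} (h : CMle (n + 1) f) :
    CMle n (fun x => -derivWithin f (Set.Ioi 0) x) := by
  constructor
  · exact (h.1.derivWithin (uniqueDiffOn_Ioi 0) (by simp)).neg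
  · intro k hk x hx
    have hxm : x ∈ Set.Ioi (0 : ℝ) := hx
    rw [iteratedDerivWithin_fun_neg,
      ← iteratedDerivWithin_succ']
    have := h.2 (k + 1) (by omega) x hx
    rw [pow_succ] at this
    nlinarith [this]

lemma CMle_mul : ∀ n : ℕ, ∀ f g : ℝ → ℝ, CMle n f → CMle n g →
    CMle n (fun x => f x * g x) := by
  intro n
  induction n with
  | zero =>
    intro f g hf hg
    refine ⟨hf.1.mul hg.1, ?_⟩
    intro k hk x hx
    interval_cases k
    simp only [pow_zero, one_mul, iteratedDerivWithin_zero]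
    have h1 := hf.2 0 le_rfl x hx
    have h2 := hg.2 0 le_rfl x hx
    simp only [pow_zero, one_mul, iteratedDerivWithin_zero] at h1 h2
    exact mul_nonneg h1 h2
  | succ n IH =>
    intro f g hf hg
    refine ⟨hf.1.mul hg.1, ?_⟩
    intro k hk x hx
    have hxm : x ∈ Set.Ioi (0 : ℝ) := hx
    rcases k with _ | j
    · simp only [pow_zero, one_mul, iteratedDerivWithin_zero]
      have h1 := hf.2 0 (by omega) x hx
      have h2 := hg.2 0 (by omega) x hx
      simp only [pow_zero, one_mul, iteratedDerivWithin_zero] at h1 h2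
      exact mul_nonneg h1 h2
    · -- k = j + 1, j ≤ n
      have hj : j ≤ n := by omega
      have hdf : DifferentiableOn ℝ f (Set.Ioi 0) := hf.1.differentiableOn (by simp)
      have hdg : DifferentiableOn ℝ g (Set.Ioi 0) := hg.1.differentiableOn (by simp)
      -- the derivative of f*g equals -((-f')·g + f·(-g')) on Ioi 0
      have hEq : Set.EqOn (derivWithin (fun x => f x * g x) (Set.Ioi 0))
          (fun y => -(((-derivWithin f (Set.Ioi 0) y) * g y)
            + (f y * (-derivWithin g (Set.Ioi 0) y)))) (Set.Ioi 0) := by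
        intro y hy
        rw [derivWithin_fun_mul (hdf y hy) (hdg y hy)]
        ring
      have hF' : CMle n (fun y => -derivWithin f (Set.Ioi 0) y) := CMle_negDeriv hf
      have hG' : CMle n (fun y => -derivWithin g (Set.Ioi 0) y) := CMle_negDeriv hg
      have hP1 : CMle n (fun y => (-derivWithin f (Set.Ioi 0) y) * g y) :=
        IH _ _ hF' (hg.mono (by omega))
      have hP2 : CMle n (fun y => f y * (-derivWithin g (Set.Ioi 0) y)) :=
        IH _ _ (hf.mono (by omega)) hG'
      have hsum : 0 ≤ (-1 : ℝ) ^ j * iteratedDerivWithin j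
          (fun y => ((-derivWithin f (Set.Ioi 0) y) * g y)
            + (f y * (-derivWithin g (Set.Ioi 0) y))) (Set.Ioi 0) x := by
        have hadd : iteratedDerivWithin j
            (fun y => ((-derivWithin f (Set.Ioi 0) y) * g y)
              + (f y * (-derivWithin g (Set.Ioi 0) y))) (Set.Ioi 0) x
            = iteratedDerivWithin j (fun y => (-derivWithin f (Set.Ioi 0) y) * g y)
                (Set.Ioi 0) x
              + iteratedDerivWithin j (fun y => f y * (-derivWithin g (Set.Ioi 0) y))
                (Set.Ioi 0) x := by
          exact iteratedDerivWithin_add hxm (uniqueDiffOn_Ioi 0)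
            ((hP1.1.of_le (by exact_mod_cast le_top)) x hxm) ((hP2.1.of_le (by exact_mod_cast le_top)) x hxm)
        rw [hadd, mul_add]
        exact add_nonneg (hP1.2 j hj x hx) (hP2.2 j hj x hx)
      rw [iteratedDerivWithin_succ']
      have hc := iteratedDerivWithin_congr (n := j) hEq hxm
      rw [hc, iteratedDerivWithin_fun_neg]
      rw [pow_succ]
      nlinarith [hsum]

/-- If g is completely monotone on (0,∞) with inf (c − g) > 0, then g/(c − g) is
completely monotone on (0,∞). -/
theorem completelyMonotone_div (g : ℝ → ℝ) (c : ℝ)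
    (hg : CompletelyMonotone g)
    (hc : ∀ x : ℝ, 0 < x → g x < c)
    (hinf : ∃ ε : ℝ, 0 < ε ∧ ∀ x : ℝ, 0 < x → g x + ε ≤ c) :
    CompletelyMonotone (fun x : ℝ => g x / (c - g x)) := by
  have hpos : ∀ x : ℝ, 0 < x → 0 < c - g x := fun x hx => by linarith [hc x hx]
  have hne : ∀ x ∈ Set.Ioi (0 : ℝ), c - g x ≠ 0 := fun x hx => (hpos x hx).ne'
  set u : ℝ → ℝ := fun x => (c - g x)⁻¹ with hu_def
  have hu_smooth : ContDiffOn ℝ (⊤ : ℕ∞) u (Set.Ioi 0) :=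
    (contDiffOn_const.sub hg.1).inv hne
  have hgCM : ∀ n : ℕ, CMle n g := fun n => ⟨hg.1, fun k _ x hx => hg.2 k x hx⟩
  have hdg : DifferentiableOn ℝ g (Set.Ioi 0) := hg.1.differentiableOn (by simp)
  -- derivative of u on Ioi 0: u' = g' * u * u, i.e. u' = -((-g')·u·u)
  have hu' : Set.EqOn (derivWithin u (Set.Ioi 0))
      (fun y => -((-derivWithin g (Set.Ioi 0) y) * (u y * u y))) (Set.Ioi 0) := by
    intro y hy
    have hgy := (hdg y hy).hasDerivWithinAt
    have h1 : HasDerivWithinAt (fun x => c - g x) (0 - derivWithin g (Set.Ioi 0) y)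
        (Set.Ioi 0) y := (hasDerivWithinAt_const y _ c).sub hgy
    have h2 : HasDerivWithinAt u
        (-(0 - derivWithin g (Set.Ioi 0) y) / (c - g y) ^ 2) (Set.Ioi 0) y :=
      h1.inv (hne y hy)
    rw [h2.derivWithin ((uniqueDiffOn_Ioi 0) y hy)]
    have hcg : c - g y ≠ 0 := hne y hy
    simp only [hu_def]
    field_simp
    ring
  -- u is completely monotone up to every order
  have huCM : ∀ n : ℕ, CMle n u := by
    intro n
    induction n with
    | zero =>
      refine ⟨hu_smooth, ?_⟩
      intro k hk x hx
      interval_cases k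
      simp only [pow_zero, one_mul, iteratedDerivWithin_zero]
      exact (inv_pos.mpr (hpos x hx)).le
    | succ n IH =>
      refine ⟨hu_smooth, ?_⟩
      intro k hk x hx
      have hxm : x ∈ Set.Ioi (0 : ℝ) := hx
      rcases k with _ | j
      · simp only [pow_zero, one_mul, iteratedDerivWithin_zero]
        exact (inv_pos.mpr (hpos x hx)).le
      · have hj : j ≤ n := by omega
        have hG' : CMle n (fun y => -derivWithin g (Set.Ioi 0) y) :=
          CMle_negDeriv (hgCM (n + 1))
        have hP : CMle n (fun y => (-derivWithin g (Set.Ioi 0) y) * (u y * u y)) :=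
          CMle_mul n _ _ hG' (CMle_mul n _ _ IH IH)
        rw [iteratedDerivWithin_succ',
          iteratedDerivWithin_congr (n := j) hu' hxm,
          iteratedDerivWithin_fun_neg]
        have := hP.2 j hj x hx
        rw [pow_succ]
        nlinarith [this]
  -- assemble: g/(c-g) = g * u
  have hfun : (fun x : ℝ => g x / (c - g x)) = fun x => g x * u x := by
    funext x; rw [div_eq_mul_inv]
  rw [hfun]
  constructor
  · exact hg.1.mul hu_smooth
  · intro n x hx
    exact (CMle_mul n g u (hgCM n) (huCM n)).2 n le_rfl x hx
end

section
/- Let c > 1 and let φ : ℝ → ℝ be continuous, bounded, not identically zero, nonnegative, and satisfy c·φ(x) − φ(x)² = (K ∗ φ)(x) for all x, where K ∈ L¹(ℝ) is strictly positive. Then 0 < φ(x) < c for all x ∈ ℝ. If additionally φ(x) → 0 as |x| → ∞, then sup_{x∈ℝ} φ(x) < c. -/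
open MeasureTheory

/-!
The convolution of a kernel that is positive off the origin with a nonnegative bounded
function that is positive on a set of positive measure is positive everywhere. Hence
`c φ - φ² = K ∗ φ > 0`, which forces `0 < φ < c` pointwise. If `φ` vanishes at infinity,
it attains its supremum, which is therefore one of the values `φ x₀ < c`.
-/

section Convolution

variable {G : Type*} [AddGroup G] [MeasurableSpace G] [MeasurableAdd G] [MeasurableNeg G]
  {μ : Measure G} [μ.IsAddLeftInvariant] [μ.IsNegInvariant] {K φ : G → ℝ}

theorem integrable_kernel_sub_mul (hK : Integrable K μ) (hφm : AEStronglyMeasurable φ μ)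
    {C : ℝ} (hC : ∀ y, |φ y| ≤ C) (x : G) : Integrable (fun y => K (x - y) * φ y) μ :=
  (hK.comp_sub_left x).mul_bdd hφm (Filter.Eventually.of_forall hC)

theorem integral_kernel_sub_mul_pos [NullSingletonClass μ] (hK : Integrable K μ)
    (hKpos : ∀ x, x ≠ 0 → 0 < K x) (hφm : AEStronglyMeasurable φ μ) {C : ℝ}
    (hC : ∀ y, |φ y| ≤ C) (hφ0 : ∀ y, 0 ≤ φ y)
    (hφpos : 0 < μ {y | 0 < φ y}) (x : G) : 0 < ∫ y, K (x - y) * φ y ∂μ := by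
  have hKx : ∀ y, y ≠ x → 0 < K (x - y) := fun y hy => hKpos _ (sub_ne_zero.mpr hy.symm)
  have hnonneg : 0 ≤ᵐ[μ] fun y => K (x - y) * φ y := by
    filter_upwards [μ.ae_ne x] with y hy
    exact mul_nonneg (hKx y hy).le (hφ0 y)
  rw [integral_pos_iff_support_of_nonneg_ae hnonneg (integrable_kernel_sub_mul hK hφm hC x)]
  have hsupp : {y | 0 < φ y} \ {x} ⊆ Function.support fun y => K (x - y) * φ y :=
    fun y ⟨hy, hyx⟩ => (mul_pos (hKx y hyx) hy).ne'
  calc 0 < μ {y | 0 < φ y} := hφpos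
    _ = μ ({y | 0 < φ y} \ {x}) := (measure_sdiff_null (measure_singleton x)).symm
    _ ≤ _ := measure_mono hsupp

end Convolution

theorem measure_setOf_pos_pos {X : Type*} [TopologicalSpace X] [MeasurableSpace X]
    (μ : Measure X) [μ.IsOpenPosMeasure] {φ : X → ℝ} (hφ : Continuous φ) (hφ0 : ∀ x, 0 ≤ φ x)
    (hφne : φ ≠ 0) : 0 < μ {y | 0 < φ y} := by
  obtain ⟨x, hx⟩ := Function.ne_iff.mp hφne
  exact (isOpen_lt continuous_const hφ).measure_pos μ ⟨x, (hφ0 x).lt_of_ne' hx⟩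

theorem Continuous.exists_forall_ge_of_tendsto_cocompact_zero {X : Type*} [TopologicalSpace X]
    {φ : X → ℝ} (hφ : Continuous φ) (hlim : Filter.Tendsto φ (Filter.cocompact X) (nhds 0))
    {x₁ : X} (hx₁ : 0 < φ x₁) : ∃ x₀, ∀ x, φ x ≤ φ x₀ :=
  hφ.exists_forall_ge' x₁ ((hlim.eventually (gt_mem_nhds hx₁)).mono fun _ hx => hx.le)

theorem pos_and_lt_of_mul_sub_sq_pos {a c : ℝ} (ha : 0 ≤ a) (h : 0 < c * a - a ^ 2) :
    0 < a ∧ a < c := by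
  have ha' : 0 < a := ha.lt_of_ne fun h0 => by simp [← h0] at h
  exact ⟨ha', by nlinarith⟩

theorem solution_bounds_general (c : ℝ) (K φ : ℝ → ℝ)
    (hK : MeasureTheory.Integrable K)
    (hKpos : ∀ x : ℝ, x ≠ 0 → 0 < K x)
    (hφcont : Continuous φ)
    (hφbdd : ∃ C : ℝ, ∀ x : ℝ, |φ x| ≤ C)
    (hφ0 : ∀ x : ℝ, 0 ≤ φ x)
    (hφne : φ ≠ 0)
    (heq : ∀ x : ℝ, c * φ x - (φ x) ^ 2 = ∫ y : ℝ, K (x - y) * φ y) :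
    (∀ x : ℝ, 0 < φ x ∧ φ x < c) ∧
    (Filter.Tendsto φ (Filter.cocompact ℝ) (nhds 0) → ∃ M : ℝ, M < c ∧ ∀ x : ℝ, φ x ≤ M) := by
  obtain ⟨C, hC⟩ := hφbdd
  have hbounds : ∀ x, 0 < φ x ∧ φ x < c := fun x =>
    pos_and_lt_of_mul_sub_sq_pos (hφ0 x) <| heq x ▸ integral_kernel_sub_mul_pos hK hKpos
      hφcont.aestronglyMeasurable hC hφ0 (measure_setOf_pos_pos volume hφcont hφ0 hφne) x
  refine ⟨hbounds, fun hlim => ?_⟩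
  obtain ⟨x₀, hx₀⟩ := hφcont.exists_forall_ge_of_tendsto_cocompact_zero hlim (hbounds 0).1
  exact ⟨φ x₀, (hbounds x₀).2, hx₀⟩

/-- Any nonzero continuous bounded nonnegative solution of c·φ − φ² = K ∗ φ with
K ∈ L¹ strictly positive satisfies 0 < φ < c; if moreover φ → 0 at infinity, then
sup φ < c. -/
theorem solution_bounds (c : ℝ) (hc : 1 < c) (K φ : ℝ → ℝ)
    (hK : MeasureTheory.Integrable K)
    (hKpos : ∀ x : ℝ, x ≠ 0 → 0 < K x)
    (hφcont : Continuous φ)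
    (hφbdd : ∃ C : ℝ, ∀ x : ℝ, |φ x| ≤ C)
    (hφ0 : ∀ x : ℝ, 0 ≤ φ x)
    (hφne : φ ≠ 0)
    (heq : ∀ x : ℝ, c * φ x - (φ x) ^ 2 = ∫ y : ℝ, K (x - y) * φ y) :
    (∀ x : ℝ, 0 < φ x ∧ φ x < c) ∧
    (Filter.Tendsto φ (Filter.cocompact ℝ) (nhds 0) → ∃ M : ℝ, M < c ∧ ∀ x : ℝ, φ x ≤ M) :=
  solution_bounds_general c K φ hK hKpos hφcont hφbdd hφ0 hφne heq
end

section
/- Let H : ℝ → ℝ be even, integrable, and monotonically decreasing on (0,∞). If f : ℝ → ℝ is bounded, integrable, satisfies f(x) ≥ 0 for x ≥ λ and f(x) = −f(2λ − x) for all x (odd with respect to λ), then (H ∗ f)(x) ≥ 0 for all x ≥ λ. -/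
open MeasureTheory Set

/-! Folding the integral about `λ` gives
`(H ∗ f)(x) = ∫_λ^∞ (H(x - y) - H(x + y - 2λ)) f(y) dy`.
For `x, y ≥ λ` we have `|x - y| ≤ x + y - 2λ`, so for an even `H` decreasing on `(0, ∞)` the kernel
difference is nonnegative (off the null set `y = x`), and so is `f(y)`. -/

theorem Function.Even.le_of_abs_le_abs {H : ℝ → ℝ} (hH : H.Even) (hH_anti : AntitoneOn H (Ioi 0))
    {a b : ℝ} (ha : a ≠ 0) (hab : |a| ≤ |b|) : H b ≤ H a := by
  have habs : ∀ z, H |z| = H z := fun z => by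
    rcases abs_choice z with h | h <;> rw [h]
    exact hH z
  rw [← habs a, ← habs b]
  exact hH_anti (abs_pos.2 ha) ((abs_pos.2 ha).trans_le hab) hab

theorem setIntegral_Ioi_comp_sub_left {E : Type*} [NormedAddCommGroup E] [NormedSpace ℝ E]
    (g : ℝ → E) (c : ℝ) : ∫ y in Ioi c, g (2 * c - y) = ∫ y in Iio c, g y := by
  have hpre : (fun y => 2 * c - y) ⁻¹' Iio c = Ioi c := by
    ext y; simp only [mem_preimage, mem_Iio, mem_Ioi]; constructor <;> intro h <;> linarith
  rw [← hpre]
  exact (Measure.measurePreserving_sub_left volume (2 * c)).setIntegral_preimage_emb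
    (MeasurableEquiv.subLeft (2 * c)).measurableEmbedding g (Iio c)

theorem integral_eq_setIntegral_Ioi_add_comp_sub_left {E : Type*} [NormedAddCommGroup E]
    [NormedSpace ℝ E] {g : ℝ → E} (hg : Integrable g) (c : ℝ) :
    ∫ y, g y = ∫ y in Ioi c, (g y + g (2 * c - y)) := by
  rw [← intervalIntegral.integral_Iio_add_Ici hg.integrableOn hg.integrableOn,
    integral_Ici_eq_integral_Ioi, ← setIntegral_Ioi_comp_sub_left,
    integral_add hg.integrableOn (hg.comp_sub_left (2 * c)).integrableOn, add_comm]

theorem integral_mul_nonneg_of_even_of_odd_about {H f : ℝ → ℝ} {c x : ℝ} (hH : H.Even)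
    (hH_anti : AntitoneOn H (Ioi 0)) (hf_nonneg : ∀ y, c < y → 0 ≤ f y)
    (hf_odd : ∀ y, f (2 * c - y) = -f y) (hx : c ≤ x)
    (hint : Integrable fun y => H (x - y) * f y) : 0 ≤ ∫ y, H (x - y) * f y := by
  rw [integral_eq_setIntegral_Ioi_add_comp_sub_left hint c]
  refine setIntegral_nonneg_of_ae_restrict ?_
  filter_upwards [ae_restrict_mem measurableSet_Ioi, ae_restrict_of_ae (Measure.ae_ne volume x)]
    with y (hy : c < y) hyx
  have hker : H (x - (2 * c - y)) ≤ H (x - y) :=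
    hH.le_of_abs_le_abs hH_anti (sub_ne_zero.2 hyx.symm) <| by
      rw [abs_of_nonneg (by linarith : 0 ≤ x - (2 * c - y))]
      exact abs_le.2 ⟨by linarith, by linarith⟩
  calc (0 : ℝ) ≤ (H (x - y) - H (x - (2 * c - y))) * f y :=
        mul_nonneg (sub_nonneg.2 hker) (hf_nonneg y hy)
    _ = H (x - y) * f y + H (x - (2 * c - y)) * f (2 * c - y) := by rw [hf_odd]; ring

/-- Convolution of an even kernel, decreasing on (0,∞), with a function that is odd
about λ and nonnegative on [λ,∞), is nonnegative on [λ,∞). -/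
theorem conv_nonneg_halfline (H f : ℝ → ℝ) (lam : ℝ)
    (hHeven : ∀ x : ℝ, H x = H (-x))
    (hHint : MeasureTheory.Integrable H)
    (hHmono : ∀ s t : ℝ, 0 < s → s < t → H t ≤ H s)
    (hfbdd : ∃ C : ℝ, ∀ x : ℝ, |f x| ≤ C)
    (hfint : MeasureTheory.Integrable f)
    (hfpos : ∀ x : ℝ, lam ≤ x → 0 ≤ f x)
    (hfodd : ∀ x : ℝ, f x = -f (2 * lam - x)) :
    ∀ x : ℝ, lam ≤ x → 0 ≤ ∫ y : ℝ, H (x - y) * f y := by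
  intro x hx
  obtain ⟨C, hC⟩ := hfbdd
  have hH_anti : AntitoneOn H (Ioi 0) := fun s hs t _ hst =>
    hst.eq_or_lt.elim (fun h => h ▸ le_rfl) (hHmono s t hs)
  have hint : Integrable fun y => H (x - y) * f y :=
    (hHint.comp_sub_left x).mul_bdd hfint.aestronglyMeasurable (.of_forall hC)
  refine integral_mul_nonneg_of_even_of_odd_about (fun z => (hHeven z).symm) hH_anti
    (fun y hy => hfpos y hy.le) (fun y => ?_) hx hint
  rw [hfodd y, neg_neg]
end

section
/- Under the hypotheses of the half-line positivity lemma, with H strictly decreasing on (0,∞), if additionally f is continuous and f is not identically zero on [λ,∞), then (H ∗ f)(x) > 0 for all x > λ. -/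
open MeasureTheory Set

/-!
Pairing `y` with its mirror image `2λ - y` and using that `f` is odd about `λ`, twice the
convolution at `x` is `∫ k`, where `k y = (H (x - y) - H (x - 2λ + y)) * f y` is symmetric about
`λ`. For `x, y > λ` the point `y` is strictly closer to `x` than `2λ - y` is, so, `H` being even
and strictly decreasing in `|·|`, the bracket is positive unless `y = x`. Hence `k ≥ 0` a.e., and
`k > 0` on the nonempty open set `{y > λ | f y > 0}` minus the point `x`, a set of positive measure.
-/

theorem two_mul_integral_eq_integral_add_comp_sub_left {g : ℝ → ℝ} (hg : Integrable g) (a : ℝ) :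
    2 * ∫ y, g y = ∫ y, (g y + g (a - y)) := by
  rw [integral_add hg (hg.comp_sub_left a), integral_sub_left_eq_self, two_mul]

section EvenDecreasingKernel

variable {H : ℝ → ℝ} (hHeven : ∀ x : ℝ, H x = H (-x))
  (hHmono : ∀ s t : ℝ, 0 < s → s < t → H t < H s)
include hHeven hHmono

theorem apply_lt_apply_of_abs_lt_abs {s t : ℝ} (hs : s ≠ 0) (hst : |s| < |t|) : H t < H s := by
  have habs : ∀ u, H |u| = H u := fun u => by
    rcases abs_choice u with h | h <;> rw [h]
    exact (hHeven u).symm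
  rw [← habs s, ← habs t]
  exact hHmono _ _ (abs_pos.2 hs) hst

theorem apply_add_lt_apply_sub {lam x y : ℝ} (hx : lam < x) (hy : lam < y) (hyx : y ≠ x) :
    H (x - 2 * lam + y) < H (x - y) := by
  refine apply_lt_apply_of_abs_lt_abs hHeven hHmono (sub_ne_zero.2 hyx.symm) ?_
  rw [abs_of_pos (by linarith : 0 < x - 2 * lam + y)]
  exact abs_sub_lt_iff.2 ⟨by linarith, by linarith⟩

end EvenDecreasingKernel

def reflectedIntegrand (H f : ℝ → ℝ) (lam x y : ℝ) : ℝ :=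
  H (x - y) * f y + H (x - (2 * lam - y)) * f (2 * lam - y)

section ReflectedIntegrand

variable {H f : ℝ → ℝ} {lam x : ℝ}

theorem reflectedIntegrand_reflect (y : ℝ) :
    reflectedIntegrand H f lam x (2 * lam - y) = reflectedIntegrand H f lam x y := by
  rw [reflectedIntegrand, reflectedIntegrand, sub_sub_cancel, add_comm]

theorem reflectedIntegrand_eq (hfodd : ∀ x : ℝ, f x = -f (2 * lam - x)) (y : ℝ) :
    reflectedIntegrand H f lam x y = (H (x - y) - H (x - 2 * lam + y)) * f y := by
  have hf : f (2 * lam - y) = -f y := by linarith [hfodd y]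
  rw [reflectedIntegrand, hf, sub_sub_eq_add_sub, add_sub_right_comm]
  ring

variable (hHeven : ∀ x : ℝ, H x = H (-x)) (hHmono : ∀ s t : ℝ, 0 < s → s < t → H t < H s)
  (hfodd : ∀ x : ℝ, f x = -f (2 * lam - x))
include hHeven hHmono hfodd

theorem reflectedIntegrand_pos (hx : lam < x) {y : ℝ} (hy : lam < y) (hyx : y ≠ x)
    (hfy : 0 < f y) : 0 < reflectedIntegrand H f lam x y := by
  rw [reflectedIntegrand_eq hfodd]
  exact mul_pos (sub_pos.2 (apply_add_lt_apply_sub hHeven hHmono hx hy hyx)) hfy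

theorem reflectedIntegrand_nonneg_ae (hfpos : ∀ x : ℝ, lam ≤ x → 0 ≤ f x) (hx : lam < x) :
    0 ≤ᵐ[volume] reflectedIntegrand H f lam x := by
  have right : ∀ y, lam < y → y ≠ x → 0 ≤ reflectedIntegrand H f lam x y := fun y hy hyx => by
    rw [reflectedIntegrand_eq hfodd]
    exact mul_nonneg (sub_nonneg.2 (apply_add_lt_apply_sub hHeven hHmono hx hy hyx).le)
      (hfpos y hy.le)
  filter_upwards [Measure.ae_ne volume lam, Measure.ae_ne volume x,
    Measure.ae_ne volume (2 * lam - x)] with y hylam hyx hyx'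
  rcases hylam.lt_or_gt with hy | hy
  · rw [← reflectedIntegrand_reflect]
    exact right _ (by linarith) fun h => hyx' (by linarith)
  · exact right y hy hyx

theorem volume_support_reflectedIntegrand_pos (hfcont : Continuous f)
    (hfpos : ∀ x : ℝ, lam ≤ x → 0 ≤ f x) (hfne : ∃ x : ℝ, lam ≤ x ∧ f x ≠ 0) (hx : lam < x) :
    0 < volume (Function.support (reflectedIntegrand H f lam x)) := by
  obtain ⟨y₀, hy₀, hfy₀⟩ := hfne
  have hflam : f lam = 0 := by
    have h := hfodd lam
    rw [show 2 * lam - lam = lam by ring] at h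
    linarith
  set U := Ioi lam ∩ {y | 0 < f y}
  have hU : IsOpen U := isOpen_Ioi.inter (isOpen_lt continuous_const hfcont)
  have hy₀U : y₀ ∈ U :=
    ⟨hy₀.lt_of_ne (by rintro rfl; exact hfy₀ hflam), (hfpos y₀ hy₀).lt_of_ne hfy₀.symm⟩
  calc 0 < volume U := hU.measure_pos volume ⟨y₀, hy₀U⟩
    _ = volume (U \ {x}) := (measure_sdiff_null (measure_singleton x)).symm
    _ ≤ volume (Function.support (reflectedIntegrand H f lam x)) :=
      measure_mono fun y ⟨⟨hy, hfy⟩, hyx⟩ =>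
        (reflectedIntegrand_pos hHeven hHmono hfodd hx hy hyx hfy).ne'

end ReflectedIntegrand

theorem conv_pos_halfline_general (H f : ℝ → ℝ) (lam : ℝ)
    (hHeven : ∀ x : ℝ, H x = H (-x))
    (hHint : MeasureTheory.Integrable H)
    (hHmono : ∀ s t : ℝ, 0 < s → s < t → H t < H s)
    (hfcont : Continuous f)
    (hfbdd : ∃ C : ℝ, ∀ x : ℝ, |f x| ≤ C)
    (hfpos : ∀ x : ℝ, lam ≤ x → 0 ≤ f x)
    (hfodd : ∀ x : ℝ, f x = -f (2 * lam - x))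
    (hfne : ∃ x : ℝ, lam ≤ x ∧ f x ≠ 0) :
    ∀ x : ℝ, lam < x → 0 < ∫ y : ℝ, H (x - y) * f y := by
  intro x hx
  obtain ⟨C, hC⟩ := hfbdd
  have hg : Integrable fun y => H (x - y) * f y :=
    (hHint.comp_sub_left x).mul_bdd hfcont.aestronglyMeasurable (ae_of_all _ hC)
  have hsymm : 2 * ∫ y, H (x - y) * f y = ∫ y, reflectedIntegrand H f lam x y :=
    two_mul_integral_eq_integral_add_comp_sub_left hg (2 * lam)
  have hk : 0 < ∫ y, reflectedIntegrand H f lam x y :=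
    (integral_pos_iff_support_of_nonneg_ae
      (reflectedIntegrand_nonneg_ae hHeven hHmono hfodd hfpos hx)
      (hg.add (hg.comp_sub_left (2 * lam)))).2
      (volume_support_reflectedIntegrand_pos hHeven hHmono hfodd hfcont hfpos hfne hx)
  linarith

/-- With H strictly decreasing on (0,∞) and f continuous, odd about λ, nonnegative
and not identically zero on [λ,∞), the convolution H ∗ f is strictly positive on (λ,∞). -/
theorem conv_pos_halfline (H f : ℝ → ℝ) (lam : ℝ)
    (hHeven : ∀ x : ℝ, H x = H (-x))
    (hHint : MeasureTheory.Integrable H)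
    (hHcont : ContinuousOn H {x : ℝ | x ≠ 0})
    (hHmono : ∀ s t : ℝ, 0 < s → s < t → H t < H s)
    (hfcont : Continuous f)
    (hfbdd : ∃ C : ℝ, ∀ x : ℝ, |f x| ≤ C)
    (hfint : MeasureTheory.Integrable f)
    (hfpos : ∀ x : ℝ, lam ≤ x → 0 ≤ f x)
    (hfodd : ∀ x : ℝ, f x = -f (2 * lam - x))
    (hfne : ∃ x : ℝ, lam ≤ x ∧ f x ≠ 0) :
    ∀ x : ℝ, lam < x → 0 < ∫ y : ℝ, H (x - y) * f y :=
  conv_pos_halfline_general H f lam hHeven hHint hHmono hfcont hfbdd hfpos hfodd hfne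
end
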